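/- Let α ≥ β ≥ -1/2 be real with α > -1/2, ρ = α + β + 1, and let ν be the Plancherel measure on ℝ. Let g : ℝ → ℂ be a measurable function such that for every n ∈ ℕ the function λ ↦ |λ|^(2n)·g(λ) belongs to L²(ℝ, ν), and suppose the ν-essential support of g is an unbounded subset of ℝ. Then liminf_{n→∞} (∫_ℝ |λ|^(4n)·|g(λ)|² dν(λ))^(1/(4n)) = +∞; equivalently, for every N > 0 the liminf of the sequence is at least N. -/

import Mathlib

open Complex MeasureTheory Filter

/-- The Harish-Chandra c-function of Cherednik–Opdam analysis on the real line,
`c_{α,β}(λ) = Γ(α+1)·2^(ρ−iλ)·Γ(iλ) / (Γ((ρ+iλ)/2)·Γ((α−β+1+iλ)/2))`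
with `ρ = α+β+1`. -/
noncomputable def cherednikC (α β : ℝ) (lam : ℂ) : ℂ :=
  Complex.Gamma ((α : ℂ) + 1) * (2 : ℂ) ^ (((α : ℂ) + (β : ℂ) + 1) - Complex.I * lam) *
      Complex.Gamma (Complex.I * lam) /
    (Complex.Gamma ((((α : ℂ) + (β : ℂ) + 1) + Complex.I * lam) / 2) *
      Complex.Gamma ((((α : ℂ) - (β : ℂ) + 1) + Complex.I * lam) / 2))

/-- The density of the Plancherel measure of the Cherednik–Opdam transform:
`λ ↦ |1 − ρ/(iλ)| / (8π·|c_{α,β}(λ)|²)` for `λ ≠ 0`, and `0` at `λ = 0`,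
where `ρ = α+β+1`. -/
noncomputable def plancherelDensity (α β : ℝ) (lam : ℝ) : ℝ :=
  if lam = 0 then 0 else
    ‖1 - ((α + β + 1 : ℝ) : ℂ) / (Complex.I * (lam : ℂ))‖ /
      (8 * Real.pi * ‖cherednikC α β (lam : ℂ)‖ ^ 2)

/-- The Plancherel measure `ν` of the Cherednik–Opdam transform on `ℝ`. -/
noncomputable def plancherelMeasure (α β : ℝ) : Measure ℝ :=
  volume.withDensity (fun lam => ENNReal.ofReal (plancherelDensity α β lam))

/-- The `ν`-essential support of `g`: the intersection of all closed sets outside of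
which `g` vanishes `ν`-almost everywhere. -/
def essSupport (ν : Measure ℝ) (g : ℝ → ℂ) : Set ℝ :=
  ⋂₀ {F : Set ℝ | IsClosed F ∧ ∀ᵐ lam ∂ν, lam ∉ F → g lam = 0}

/-!
If `g` does not vanish almost everywhere outside the ball of radius `N`, then the moments satisfy
`∫ |λ|^k |g|² dν ≥ N^k · c_N` with `c_N > 0`, and since `c_N^(1/k) → 1` their `k`-th roots
eventually exceed any number below `N`. As `N` is arbitrary, the roots tend to `∞`.
-/

open Metric Topology ENNReal

lemma ENNReal.tendsto_rpow_inv_natCast {c : ℝ≥0∞} (hc₀ : c ≠ 0) (hc : c ≠ ∞) :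
    Tendsto (fun k : ℕ => c ^ ((k : ℝ)⁻¹)) atTop (𝓝 1) := by
  have hpos : 0 < c.toReal := toReal_pos hc₀ hc
  have hreal : Tendsto (fun k : ℕ => c.toReal ^ ((k : ℝ)⁻¹)) atTop (𝓝 1) := by
    simpa [Function.comp_def] using (Real.continuousAt_const_rpow hpos.ne').tendsto.comp
      (tendsto_inv_atTop_nhds_zero_nat (𝕜 := ℝ))
  have := (ENNReal.continuous_ofReal.tendsto 1).comp hreal
  rw [ofReal_one] at this
  refine this.congr fun k => ?_
  simp only [Function.comp_apply, ← ofReal_rpow_of_pos hpos, ofReal_toReal hc]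

lemma setLIntegral_compl_closedBall_ne_zero_of_not_isBounded_essSupport
    {μ : Measure ℝ} {g : ℝ → ℂ} (hg : Measurable g) (hunb : ¬ Bornology.IsBounded (essSupport μ g))
    (N : ℝ) : ∫⁻ x in (closedBall 0 N)ᶜ, ENNReal.ofReal (‖g x‖ ^ 2) ∂μ ≠ 0 := by
  intro hzero
  refine hunb ((isBounded_closedBall (x := 0) (r := N)).subset
    (Set.sInter_subset_of_mem ⟨isClosed_closedBall, ?_⟩))
  have hmeas : Measurable fun x => ENNReal.ofReal (‖g x‖ ^ 2) := by fun_prop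
  filter_upwards [(ae_restrict_iff' measurableSet_closedBall.compl).1
    ((lintegral_eq_zero_iff hmeas).1 hzero)] with x hx hxN
  simpa using hx hxN

lemma ofReal_pow_mul_setLIntegral_compl_closedBall_le (μ : Measure ℝ) (h : ℝ → ℝ≥0∞) (N : ℝ)
    (k : ℕ) : ENNReal.ofReal N ^ k * ∫⁻ x in (closedBall 0 N)ᶜ, h x ∂μ ≤
      ∫⁻ x, ENNReal.ofReal (|x| ^ k) * h x ∂μ := by
  rw [← lintegral_const_mul' _ _ (pow_ne_top ofReal_ne_top)]
  refine (setLIntegral_mono' measurableSet_closedBall.compl fun x hx => ?_).trans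
    (setLIntegral_le_lintegral _ _)
  have hNx : N < |x| := by simpa using hx
  rw [ofReal_pow (abs_nonneg x)]
  gcongr

lemma tendsto_lintegral_pow_mul_rpow_inv_atTop_top {μ : Measure ℝ} {h : ℝ → ℝ≥0∞}
    (hh : ∀ N, ∫⁻ x in (closedBall 0 N)ᶜ, h x ∂μ ≠ 0) :
    Tendsto (fun k : ℕ => (∫⁻ x, ENNReal.ofReal (|x| ^ k) * h x ∂μ) ^ ((k : ℝ)⁻¹)) atTop (𝓝 ∞) := by
  refine tendsto_nhds_top fun m => ?_
  set N : ℝ := m + 1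
  -- capping at `1` keeps `c` finite, so that `c ^ k⁻¹ → 1`
  set c := min (∫⁻ x in (closedBall 0 N)ᶜ, h x ∂μ) 1
  have hc₀ : c ≠ 0 := by simp [c, hh N]
  have hc : c ≠ ∞ := ne_top_of_le_ne_top one_ne_top (min_le_right _ _)
  have hlim : Tendsto (fun k : ℕ => ENNReal.ofReal N * c ^ ((k : ℝ)⁻¹)) atTop
      (𝓝 (ENNReal.ofReal N)) := by
    simpa using ENNReal.Tendsto.const_mul (ENNReal.tendsto_rpow_inv_natCast hc₀ hc)
      (Or.inl one_ne_zero)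
  have hmN : (m : ℝ≥0∞) < ENNReal.ofReal N := by
    rw [← ENNReal.ofReal_natCast]
    exact (ofReal_lt_ofReal_iff (by positivity)).2 (lt_add_one _)
  filter_upwards [hlim.eventually_const_lt hmN, eventually_ne_atTop 0] with k hk hk₀
  refine hk.trans_le ?_
  calc ENNReal.ofReal N * c ^ ((k : ℝ)⁻¹)
      = (ENNReal.ofReal N ^ k * c) ^ ((k : ℝ)⁻¹) := by
        rw [mul_rpow_of_nonneg _ _ (by positivity), pow_rpow_inv_natCast hk₀]
    _ ≤ (∫⁻ x, ENNReal.ofReal (|x| ^ k) * h x ∂μ) ^ ((k : ℝ)⁻¹) := by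
        gcongr
        exact (mul_le_mul_right (min_le_left _ _) _).trans
          (ofReal_pow_mul_setLIntegral_compl_closedBall_le μ h N k)

theorem cherednik_support_radius_unbounded_general
    (α β : ℝ)
    (g : ℝ → ℂ) (hg : Measurable g)
    (hunb : ¬ Bornology.IsBounded (essSupport (plancherelMeasure α β) g)) :
    Filter.liminf
      (fun n : ℕ =>
        (∫⁻ lam, ENNReal.ofReal (|lam| ^ (4 * n) * ‖g lam‖ ^ 2)
            ∂(plancherelMeasure α β)) ^ ((1 : ℝ) / (4 * n)))
      atTop = ⊤ := by
  have hmoments := tendsto_lintegral_pow_mul_rpow_inv_atTop_top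
    (setLIntegral_compl_closedBall_ne_zero_of_not_isBounded_essSupport hg hunb)
  have h4n : Tendsto (fun n : ℕ => 4 * n) atTop atTop :=
    tendsto_id.const_mul_atTop' (by norm_num)
  refine Tendsto.liminf_eq ((hmoments.comp h4n).congr fun n => ?_)
  simp only [Function.comp_apply, Nat.cast_mul, Nat.cast_ofNat, one_div,
    ENNReal.ofReal_mul (pow_nonneg (abs_nonneg _) _)]

/-- Unbounded-support case of the support-radius lemma: if `|·|^(2n)·g ∈ L²(ν)`
for all `n` and the `ν`-essential support of `g` is unbounded, then
`liminf_{n→∞} (∫ |λ|^(4n)|g(λ)|² dν)^(1/(4n)) = ∞`. -/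
theorem cherednik_support_radius_unbounded
    (α β : ℝ) (hβ : -(1/2 : ℝ) ≤ β) (hβα : β ≤ α) (hα : -(1/2 : ℝ) < α)
    (ρ : ℝ) (hρ : ρ = α + β + 1)
    (g : ℝ → ℂ) (hg : Measurable g)
    (hL2 : ∀ n : ℕ, MemLp (fun lam : ℝ => (|lam| ^ (2 * n) : ℝ) • g lam) 2
      (plancherelMeasure α β))
    (hunb : ¬ Bornology.IsBounded (essSupport (plancherelMeasure α β) g)) :
    Filter.liminf
      (fun n : ℕ =>
        (∫⁻ lam, ENNReal.ofReal (|lam| ^ (4 * n) * ‖g lam‖ ^ 2)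
            ∂(plancherelMeasure α β)) ^ ((1 : ℝ) / (4 * n)))
      atTop = ⊤ :=
  cherednik_support_radius_unbounded_general α β g hg hunb
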